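/- Let d ∈ ℕ, 1 ≤ p < ∞, 0 < s < 1, and let e ⊆ {1,…,d} be nonempty. Then for every measurable f : ℝ^d → ℝ one has ∫_{ℝ^{|e|}} ∫_{ℝ^d} |Δ^e_{y_e} f(x)|^p / ∏_{j∈e} |x_j − y_j|^{1+sp} dγ(x) dγ(y_e) ≤ (2^{sp+1/2} Γ((sp+1)/2))^{−|e|} · ∫_{ℝ^{|e|}} ∫_{ℝ^d} |Δ^e_{y_e} f(x)|^p ∏_{j∈e} K_{ps}(x_j, y_j) dγ(x) dγ(y_e), as an inequality in [0,∞]. -/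

import Mathlib

open MeasureTheory Real ENNReal
open Set

lemma mehler_lb' {t : ℝ} (ht : 0 < t) (x y : ℝ) :
    (2 * t) ^ (-(1:ℝ) / 2) * Real.exp (-((x - y) ^ 2) / (4 * t)) ≤
      (1 - Real.exp (-2 * t)) ^ (-(1 : ℝ) / 2) *
        Real.exp (-(Real.exp (-2 * t) * x ^ 2 - 2 * Real.exp (-t) * x * y +
          Real.exp (-2 * t) * y ^ 2) / (2 * (1 - Real.exp (-2 * t)))) := by
  have hu0 : 0 < Real.exp (-t) := Real.exp_pos _
  have hu1 : Real.exp (-t) < 1 := Real.exp_lt_one_iff.mpr (by linarith)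
  have h2 : Real.exp (-2 * t) = Real.exp (-t) ^ 2 := by
    rw [← Real.exp_nat_mul]; ring_nf
  set u := Real.exp (-t) with hu
  rw [h2]
  have hden : 0 < 1 - u ^ 2 := by nlinarith
  have hle : 1 - u ^ 2 ≤ 2 * t := by
    have := Real.add_one_le_exp (-2 * t)
    rw [h2] at this; linarith
  have h1 : (2 * t) ^ (-(1:ℝ) / 2) ≤ (1 - u ^ 2) ^ (-(1:ℝ) / 2) :=
    Real.rpow_le_rpow_of_nonpos hden hle (by norm_num)
  have htu : t * u ≤ 1 - u := by
    have := Real.add_one_le_exp t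
    have h3 : (t + 1) * u ≤ Real.exp t * u := by nlinarith
    rw [← Real.exp_add] at h3
    simp at h3
    nlinarith
  have hE : (u ^ 2 * x ^ 2 - 2 * u * x * y + u ^ 2 * y ^ 2) * (4 * t) ≤
      (x - y) ^ 2 * (2 * (1 - u ^ 2)) := by
    have key : u ^ 2 * x ^ 2 - 2 * u * x * y + u ^ 2 * y ^ 2 =
        u * ((u + 1) / 2 * (x - y) ^ 2) + u * ((u - 1) / 2 * (x + y) ^ 2) := by ring
    have hneg : u * ((u - 1) / 2 * (x + y) ^ 2) ≤ 0 := by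
      apply mul_nonpos_of_nonneg_of_nonpos hu0.le
      apply mul_nonpos_of_nonpos_of_nonneg _ (sq_nonneg _)
      linarith
    have hE1 : u ^ 2 * x ^ 2 - 2 * u * x * y + u ^ 2 * y ^ 2 ≤
        u * ((u + 1) / 2 * (x - y) ^ 2) := by linarith
    have htu' : t * (u * (1 + u)) ≤ (1 - u) * (1 + u) := by
      have := mul_le_mul_of_nonneg_right htu (by positivity : (0:ℝ) ≤ 1 + u)
      linarith [this]
    calc (u ^ 2 * x ^ 2 - 2 * u * x * y + u ^ 2 * y ^ 2) * (4 * t)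
        ≤ (u * ((u + 1) / 2 * (x - y) ^ 2)) * (4 * t) :=
          mul_le_mul_of_nonneg_right hE1 (by positivity)
      _ = 2 * (x - y) ^ 2 * (t * (u * (1 + u))) := by ring
      _ ≤ 2 * (x - y) ^ 2 * ((1 - u) * (1 + u)) :=
          mul_le_mul_of_nonneg_left htu' (by positivity)
      _ = (x - y) ^ 2 * (2 * (1 - u ^ 2)) := by ring
  have h2exp : Real.exp (-((x - y) ^ 2) / (4 * t)) ≤
      Real.exp (-(u ^ 2 * x ^ 2 - 2 * u * x * y + u ^ 2 * y ^ 2) / (2 * (1 - u ^ 2))) := by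
    apply Real.exp_le_exp.mpr
    rw [neg_div, neg_div, neg_le_neg_iff]
    rw [div_le_div_iff₀ (by positivity) (by positivity)]
    linarith [hE]
  exact mul_le_mul h1 h2exp (Real.exp_pos _).le (Real.rpow_nonneg hden.le _)

section gammaInt

variable {σ c : ℝ}

lemma inv_image_Ioi : (fun t : ℝ => t⁻¹) '' Ioi 0 = Ioi 0 := by
  ext z
  constructor
  · rintro ⟨w, hw, rfl⟩
    exact inv_pos.mpr (show (0:ℝ) < w from hw)
  · intro hz
    exact ⟨z⁻¹, show (0:ℝ) < z⁻¹ from inv_pos.mpr (show (0:ℝ) < z from hz), inv_inv z⟩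

lemma eqon_aux (hc : 0 < c) :
    Set.EqOn (fun x : ℝ => |(-(x ^ 2)⁻¹)| • ((x⁻¹) ^ ((σ - 1) / 2) * Real.exp (-(c * x⁻¹))))
      (fun t : ℝ => t ^ (-(σ + 3) / 2) * Real.exp (-(c / t))) (Ioi 0) := by
  intro x hx
  have hx0 : (0:ℝ) < x := hx
  simp only [smul_eq_mul, abs_neg, abs_inv, abs_pow, abs_of_pos hx0]
  rw [Real.inv_rpow hx0.le, ← mul_assoc]
  congr 1
  rw [← Real.rpow_natCast x 2, ← Real.rpow_neg hx0.le, ← Real.rpow_neg hx0.le,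
    ← Real.rpow_add hx0]
  congr 1
  push_cast
  ring

lemma gamma_int_aux (hσ : 0 < σ) (hc : 0 < c) :
    IntegrableOn (fun t : ℝ => t ^ (-(σ + 3) / 2) * Real.exp (-(c / t))) (Ioi 0) ∧
    ∫ t in Ioi 0, t ^ (-(σ + 3) / 2) * Real.exp (-(c / t)) =
      c ^ (-(σ + 1) / 2) * Real.Gamma ((σ + 1) / 2) := by
  set g : ℝ → ℝ := fun u => u ^ ((σ - 1) / 2) * Real.exp (-(c * u)) with hg
  have hq : (-1 : ℝ) < (σ - 1) / 2 := by linarith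
  have hg_int : IntegrableOn g (Ioi 0) := by
    have := integrableOn_rpow_mul_exp_neg_mul_rpow hq one_pos hc
    simpa only [Real.rpow_one, neg_mul, hg] using this
  have hg_val : ∫ u in Ioi 0, g u = c ^ (-(σ + 1) / 2) * Real.Gamma ((σ + 1) / 2) := by
    have := integral_rpow_mul_exp_neg_mul_rpow one_pos hq hc
    simp only [Real.rpow_one, neg_mul] at this
    have e1 : (-((σ - 1) / 2 + 1) / 1 : ℝ) = -(σ + 1) / 2 := by ring
    have e2 : (((σ - 1) / 2 + 1) / 1 : ℝ) = (σ + 1) / 2 := by ring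
    rw [e1, e2] at this
    simpa [hg] using this
  have hderiv : ∀ x ∈ Ioi (0:ℝ), HasDerivWithinAt (fun t : ℝ => t⁻¹) (-(x ^ 2)⁻¹) (Ioi 0) x :=
    fun x hx => (hasDerivAt_inv (ne_of_gt hx)).hasDerivWithinAt
  have hinj : InjOn (fun t : ℝ => t⁻¹) (Ioi 0) := fun a _ b _ h => inv_injective h
  have key := integral_image_eq_integral_abs_deriv_smul measurableSet_Ioi hderiv hinj g
  have keyi := integrableOn_image_iff_integrableOn_abs_deriv_smul measurableSet_Ioi hderiv hinj g
  rw [inv_image_Ioi] at key keyi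
  constructor
  · exact ((keyi.mp hg_int).congr_fun (eqon_aux hc) measurableSet_Ioi)
  · rw [← setIntegral_congr_fun measurableSet_Ioi (eqon_aux hc), ← key, hg_val]

end gammaInt


/-- The standard Gaussian measure on `ι → ℝ`, with density
`(2π)^{-card ι/2} exp(-|x|²/2)` with respect to Lebesgue measure. -/
noncomputable def gaussianPi (ι : Type) [Fintype ι] : Measure (ι → ℝ) :=
  volume.withDensity fun x =>
    ENNReal.ofReal ((2 * Real.pi) ^ (-(Fintype.card ι : ℝ) / 2) *
      Real.exp (-(∑ i, x i ^ 2) / 2))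

/-- The mixed difference `Δ^e_{y_e} f(x) = ∏_{j∈e} Δ_{y_j,j} f(x)`, written via
inclusion–exclusion: the coordinates of `x` in a subset `u ⊆ e` are replaced by
the corresponding coordinates of `y`. -/
noncomputable def mixedDiff {d : ℕ} (f : (Fin d → ℝ) → ℝ) (e : Finset (Fin d))
    (y : {j : Fin d // j ∈ e} → ℝ) (x : Fin d → ℝ) : ℝ :=
  ∑ u : Finset {j : Fin d // j ∈ e}, (-1 : ℝ) ^ u.card *
    f (fun j => if hj : j ∈ e then (if ⟨j, hj⟩ ∈ u then y ⟨j, hj⟩ else x j) else x j)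

/-- The Gagliardo-type double integral
`∫∫ |Δ^e_{y_e} f(x)|^p / ∏_{j∈e} |x_j − y_j|^{1+sp} dμ(x) dν(y_e)`. -/
noncomputable def gagliardoSemi {d : ℕ} (p s : ℝ) (f : (Fin d → ℝ) → ℝ)
    (e : Finset (Fin d)) (μ : Measure (Fin d → ℝ))
    (ν : Measure ({j : Fin d // j ∈ e} → ℝ)) : ℝ≥0∞ :=
  ∫⁻ y, ∫⁻ x, ENNReal.ofReal (|mixedDiff f e y x| ^ p /
    ∏ j : {j : Fin d // j ∈ e}, |x j.1 - y j| ^ (1 + s * p)) ∂μ ∂ν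

/-- The Mehler kernel `M_t(x,y)`. -/
noncomputable def mehler (t x y : ℝ) : ℝ :=
  (1 - Real.exp (-2 * t)) ^ (-(1 : ℝ) / 2) *
    Real.exp (-(Real.exp (-2 * t) * x ^ 2 - 2 * Real.exp (-t) * x * y +
      Real.exp (-2 * t) * y ^ 2) / (2 * (1 - Real.exp (-2 * t))))

/-- The kernel `K_σ(x,y) = ∫₀^∞ M_t(x,y) t^{-σ/2-1} dt`, a value in `[0,∞]`. -/
noncomputable def Kkernel (σ x y : ℝ) : ℝ≥0∞ :=
  ∫⁻ t in Set.Ioi (0 : ℝ), ENNReal.ofReal (mehler t x y * t ^ (-σ / 2 - 1))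

/-- The kernel-type double integral
`∫∫ |Δ^e_{y_e} f(x)|^p ∏_{j∈e} K_{ps}(x_j, y_j) dγ(x) dγ(y_e)`
with respect to the Gaussian measures. -/
noncomputable def kernelSemi {d : ℕ} (p s : ℝ) (f : (Fin d → ℝ) → ℝ)
    (e : Finset (Fin d)) : ℝ≥0∞ :=
  ∫⁻ y, ∫⁻ x, ENNReal.ofReal (|mixedDiff f e y x| ^ p) *
      ∏ j : {j : Fin d // j ∈ e}, Kkernel (p * s) (x j.1) (y j)
    ∂gaussianPi (Fin d) ∂gaussianPi {j : Fin d // j ∈ e}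

lemma coord_bound {σ : ℝ} (hσ : 0 < σ) (x y : ℝ) :
    ENNReal.ofReal ((|x - y| ^ (1 + σ))⁻¹) ≤
      ENNReal.ofReal (((2:ℝ) ^ (σ + 1/2) * Real.Gamma ((σ + 1)/2))⁻¹) * Kkernel σ x y := by
  have hΓ : 0 < Real.Gamma ((σ + 1)/2) := Real.Gamma_pos_of_pos (by linarith)
  rcases eq_or_ne x y with h | h
  · rw [h, sub_self, abs_zero, Real.zero_rpow (ne_of_gt (by linarith : (0:ℝ) < 1 + σ))]
    simp
  have habs : 0 < |x - y| := abs_pos.mpr (sub_ne_zero.mpr h)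
  have ha : 0 < (x - y) ^ 2 := by have hne := sub_ne_zero.mpr h; positivity
  set c : ℝ := (x - y) ^ 2 / 4 with hc_def
  have hc : 0 < c := by positivity
  -- lower bound on the kernel
  have h1 : ∫⁻ t in Ioi (0:ℝ),
      ENNReal.ofReal ((2:ℝ) ^ (-(1:ℝ)/2) * (t ^ (-(σ + 3) / 2) * Real.exp (-(c / t)))) ≤
      Kkernel σ x y := by
    apply setLIntegral_mono' measurableSet_Ioi
    intro t ht
    apply ENNReal.ofReal_le_ofReal
    have heq : (2:ℝ) ^ (-(1:ℝ)/2) * (t ^ (-(σ + 3) / 2) * Real.exp (-(c / t))) =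
        ((2 * t) ^ (-(1:ℝ) / 2) * Real.exp (-((x - y) ^ 2) / (4 * t))) *
          t ^ (-σ / 2 - 1) := by
      have e1 : ((2:ℝ) * t) ^ (-(1:ℝ)/2) = 2 ^ (-(1:ℝ)/2) * t ^ (-(1:ℝ)/2) :=
        Real.mul_rpow (by norm_num) ht.le
      have e2 : t ^ (-(σ + 3)/2) = t ^ (-(1:ℝ)/2) * t ^ (-σ/2 - 1) := by
        rw [← Real.rpow_add ht]; congr 1; ring
      have e3 : -((x - y) ^ 2) / (4 * t) = -(c / t) := by rw [hc_def]; ring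
      calc (2:ℝ) ^ (-(1:ℝ)/2) * (t ^ (-(σ + 3) / 2) * Real.exp (-(c / t)))
          = 2 ^ (-(1:ℝ)/2) * ((t ^ (-(1:ℝ)/2) * t ^ (-σ/2 - 1)) * Real.exp (-(c/t))) := by
            rw [← e2]
        _ = (2 ^ (-(1:ℝ)/2) * t ^ (-(1:ℝ)/2) * Real.exp (-(c/t))) * t ^ (-σ/2 - 1) := by
            ring
        _ = ((2 * t) ^ (-(1:ℝ) / 2) * Real.exp (-((x - y) ^ 2) / (4 * t))) *
              t ^ (-σ / 2 - 1) := by rw [e1, e3]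
    rw [heq]
    exact mul_le_mul_of_nonneg_right (mehler_lb' ht x y)
      (Real.rpow_nonneg (le_of_lt ht) _)
  -- compute the lower-bound integral
  have hint := (gamma_int_aux hσ hc).1
  have hval := (gamma_int_aux hσ hc).2
  have h2 : ∫⁻ t in Ioi (0:ℝ),
      ENNReal.ofReal ((2:ℝ) ^ (-(1:ℝ)/2) * (t ^ (-(σ + 3) / 2) * Real.exp (-(c / t)))) =
      ENNReal.ofReal ((2:ℝ) ^ (-(1:ℝ)/2) * (c ^ (-(σ + 1) / 2) * Real.Gamma ((σ + 1)/2))) := by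
    rw [← ofReal_integral_eq_lintegral_ofReal (hint.const_mul _)]
    · rw [integral_const_mul, hval]
    · filter_upwards [ae_restrict_mem measurableSet_Ioi] with t ht
      have ht0 : (0:ℝ) < t := ht
      positivity
  -- the real identity
  have hpow : (2:ℝ) ^ (-(1:ℝ)/2) * (2:ℝ) ^ (σ + 1) = (2:ℝ) ^ (σ + 1/2) := by
    rw [← Real.rpow_add two_pos]; congr 1; ring
  have ec : c ^ (-(σ + 1) / 2) = (|x - y| ^ (1 + σ))⁻¹ * (2:ℝ) ^ (σ + 1) := by
    have e4 : (4:ℝ) = (2:ℝ) ^ (2:ℝ) := by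
      rw [show ((2:ℝ):ℝ) = ((2:ℕ):ℝ) by norm_num, Real.rpow_natCast]; norm_num
    rw [hc_def, e4, Real.div_rpow (sq_nonneg _) (Real.rpow_nonneg (by norm_num) _), ← sq_abs,
      ← Real.rpow_natCast |x - y| 2, ← Real.rpow_mul (abs_nonneg _),
      ← Real.rpow_mul (by norm_num : (0:ℝ) ≤ 2)]
    rw [show ((2:ℕ):ℝ) * (-(σ + 1) / 2) = -(1 + σ) by push_cast; ring,
      show (2:ℝ) * (-(σ + 1) / 2) = -(σ + 1) by ring,
      Real.rpow_neg (by norm_num : (0:ℝ) ≤ 2), div_eq_mul_inv, inv_inv,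
      Real.rpow_neg (abs_nonneg _)]
  have hreal : ((2:ℝ) ^ (σ + 1/2) * Real.Gamma ((σ + 1)/2))⁻¹ *
      ((2:ℝ) ^ (-(1:ℝ)/2) * (c ^ (-(σ + 1) / 2) * Real.Gamma ((σ + 1)/2))) =
      (|x - y| ^ (1 + σ))⁻¹ := by
    have hBne : ((2:ℝ) ^ (σ + 1/2)) ≠ 0 := ne_of_gt (Real.rpow_pos_of_pos two_pos _)
    rw [ec, mul_inv]
    calc ((2:ℝ) ^ (σ + 1/2))⁻¹ * (Real.Gamma ((σ + 1)/2))⁻¹ *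
          ((2:ℝ) ^ (-(1:ℝ)/2) * ((|x - y| ^ (1 + σ))⁻¹ * (2:ℝ) ^ (σ + 1) *
            Real.Gamma ((σ + 1)/2)))
        = ((2:ℝ) ^ (-(1:ℝ)/2) * (2:ℝ) ^ (σ + 1)) * ((2:ℝ) ^ (σ + 1/2))⁻¹ *
          ((Real.Gamma ((σ + 1)/2))⁻¹ * Real.Gamma ((σ + 1)/2)) *
          (|x - y| ^ (1 + σ))⁻¹ := by ring
      _ = (|x - y| ^ (1 + σ))⁻¹ := by
          rw [hpow, mul_inv_cancel₀ hBne, inv_mul_cancel₀ (ne_of_gt hΓ)]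
          ring
  calc ENNReal.ofReal ((|x - y| ^ (1 + σ))⁻¹)
      = ENNReal.ofReal (((2:ℝ) ^ (σ + 1/2) * Real.Gamma ((σ + 1)/2))⁻¹) *
        ENNReal.ofReal ((2:ℝ) ^ (-(1:ℝ)/2) * (c ^ (-(σ + 1) / 2) * Real.Gamma ((σ + 1)/2))) := by
        rw [← ENNReal.ofReal_mul (by positivity), hreal]
    _ ≤ _ := by
        apply mul_le_mul_right
        rw [← h2]
        exact h1

/-- The Gagliardo seminorm integral is bounded by the kernel seminorm integral:
`∫∫ |Δ^e f|^p / ∏|x_j−y_j|^{1+sp} dγ dγ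
  ≤ (2^{sp+1/2} Γ((sp+1)/2))^{−|e|} ∫∫ |Δ^e f|^p ∏ K_{ps}(x_j,y_j) dγ dγ`,
as an inequality in `[0,∞]`. -/
theorem gagliardo_le_kernel_semi (d : ℕ) (hd : 0 < d) (p s : ℝ)
    (hp : 1 ≤ p) (hs0 : 0 < s) (hs1 : s < 1)
    (e : Finset (Fin d)) (he : e.Nonempty) (f : (Fin d → ℝ) → ℝ) (hf : Measurable f) :
    gagliardoSemi p s f e (gaussianPi (Fin d)) (gaussianPi {j : Fin d // j ∈ e}) ≤
      ENNReal.ofReal ((((2 : ℝ) ^ (s * p + 1 / 2) * Real.Gamma ((s * p + 1) / 2))⁻¹) ^ e.card) *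
        kernelSemi p s f e := by
  have hσ : 0 < s * p := mul_pos hs0 (lt_of_lt_of_le one_pos hp)
  have hC : 0 ≤ (((2 : ℝ) ^ (s * p + 1 / 2) * Real.Gamma ((s * p + 1) / 2))⁻¹) :=
    inv_nonneg.mpr (mul_nonneg (Real.rpow_nonneg (by norm_num) _)
      (Real.Gamma_nonneg_of_nonneg (by linarith)))
  unfold gagliardoSemi kernelSemi
  rw [← lintegral_const_mul' _ _ ENNReal.ofReal_ne_top]
  refine lintegral_mono fun yv => ?_
  rw [← lintegral_const_mul' _ _ ENNReal.ofReal_ne_top]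
  refine lintegral_mono fun xv => ?_
  have hD : 0 ≤ |mixedDiff f e yv xv| ^ p := Real.rpow_nonneg (abs_nonneg _) _
  rw [div_eq_mul_inv, ← Finset.prod_inv_distrib, ENNReal.ofReal_mul hD,
    ENNReal.ofReal_prod_of_nonneg
      (fun j _ => inv_nonneg.mpr (Real.rpow_nonneg (abs_nonneg _) _))]
  have key : ∏ j : {j : Fin d // j ∈ e},
      ENNReal.ofReal ((|xv j.1 - yv j| ^ (1 + s * p))⁻¹) ≤
      ENNReal.ofReal ((((2 : ℝ) ^ (s * p + 1 / 2) * Real.Gamma ((s * p + 1) / 2))⁻¹) ^ e.card) *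
        ∏ j : {j : Fin d // j ∈ e}, Kkernel (p * s) (xv j.1) (yv j) := by
    calc ∏ j : {j : Fin d // j ∈ e}, ENNReal.ofReal ((|xv j.1 - yv j| ^ (1 + s * p))⁻¹)
        ≤ ∏ j : {j : Fin d // j ∈ e},
            (ENNReal.ofReal (((2 : ℝ) ^ (s * p + 1 / 2) * Real.Gamma ((s * p + 1) / 2))⁻¹) *
              Kkernel (p * s) (xv j.1) (yv j)) := by
          refine Finset.prod_le_prod' fun j _ => ?_
          rw [mul_comm p s]
          exact coord_bound hσ _ _
      _ = (∏ _j : {j : Fin d // j ∈ e},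
            ENNReal.ofReal (((2 : ℝ) ^ (s * p + 1 / 2) * Real.Gamma ((s * p + 1) / 2))⁻¹)) *
          ∏ j : {j : Fin d // j ∈ e}, Kkernel (p * s) (xv j.1) (yv j) :=
          Finset.prod_mul_distrib
      _ = _ := by
          rw [Finset.prod_const, ← ENNReal.ofReal_pow hC, Finset.card_univ, Fintype.card_coe]
  calc ENNReal.ofReal (|mixedDiff f e yv xv| ^ p) *
        ∏ j : {j : Fin d // j ∈ e}, ENNReal.ofReal ((|xv j.1 - yv j| ^ (1 + s * p))⁻¹)
      ≤ ENNReal.ofReal (|mixedDiff f e yv xv| ^ p) *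
        (ENNReal.ofReal ((((2 : ℝ) ^ (s * p + 1 / 2) * Real.Gamma ((s * p + 1) / 2))⁻¹) ^ e.card) *
          ∏ j : {j : Fin d // j ∈ e}, Kkernel (p * s) (xv j.1) (yv j)) :=
        mul_le_mul_right key _
    _ = _ := by ring
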